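/- arXiv:2108.02447 — 2 statements merged into one kernel-verified Lean document; each statement's English description precedes it below -/
import Mathlib

section
/- Let (μ_t)_{t>0} be an ATS mixing family. Then for every t > 0 one has ∫ √x dμ_t(x) ≤ √2; moreover, as t → 0⁺, ∫ √x dμ_t(x) tends to 0 if β < 1 and to 1 if β > 1. -/
/-!
For `x ≥ 0` the substitution `v = u x` gives `√x = C⁻¹ ∫₀^∞ (1 - e^{-ux}) u^{-3/2} du` with
`C = ∫₀^∞ (1 - e^{-u}) u^{-3/2} du`, so by Tonelli
`∫ √x dμ_t = C⁻¹ ∫₀^∞ (1 - L_t(u)) u^{-3/2} du`.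
With `a_t = k_t / ((1 - α) t)` one has `L_t(u) = exp (-q(a_t) / α)`, where
`q(a) = ((1 + u a)^α - 1) / a` is a difference quotient of `s ↦ (1 + u s)^α` at `0`.
Bernoulli's inequality gives `0 ≤ q(a) ≤ α u`, hence `e^{-u} ≤ L_t(u) ≤ 1`: the integrand is
dominated by the one defining `C`, which yields the bound `∫ √x dμ_t ≤ 1`.
As `t → 0⁺`, `a_t → ∞` if `β < 1` and then `q(a_t) → 0`; `a_t → 0⁺` if `β > 1` and then
`q(a_t) → α u`. Dominated convergence gives the limits `0` and `C / C = 1`.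
-/

open MeasureTheory Real Filter Set Topology Asymptotics

/-- The ATS Laplace transform `L_t(u)` with parameters `α ∈ (0,1)`, `k̄ > 0`, `β ∈ ℝ`,
where `k_t = k̄·t^β`. -/
noncomputable def ATSLaplace (α kbar β : ℝ) (t u : ℝ) : ℝ :=
  Real.exp ((t / (kbar * t ^ β)) * ((1 - α) / α) *
    (1 - (1 + u * (kbar * t ^ β) / ((1 - α) * t)) ^ α))

/-- Standard normal cumulative distribution function. -/
noncomputable def stdN (z : ℝ) : ℝ :=
  (Real.sqrt (2 * Real.pi))⁻¹ * ∫ x in Set.Iic z, Real.exp (-x ^ 2 / 2)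

/-- Standard normal probability density function. -/
noncomputable def stdNd (z : ℝ) : ℝ :=
  (Real.sqrt (2 * Real.pi))⁻¹ * Real.exp (-z ^ 2 / 2)

/-- The drift `φ_t`, defined by `φ_t·t = −ln L_t(t·σ̄²·η_t)` with `η_t = η̄·t^δ`. -/
noncomputable def ATSphi (α kbar σbar ηbar β δ : ℝ) (t : ℝ) : ℝ :=
  -Real.log (ATSLaplace α kbar β t (t * σbar ^ 2 * (ηbar * t ^ δ))) / t

/-- The quantity `l_t^z = −σ̄·η_t·√(z·t) + φ_t·√t/(σ̄·√z)`. -/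
noncomputable def ATSl (α kbar σbar ηbar β δ : ℝ) (t z : ℝ) : ℝ :=
  -(σbar * (ηbar * t ^ δ)) * Real.sqrt (z * t) +
    ATSphi α kbar σbar ηbar β δ t * Real.sqrt t / (σbar * Real.sqrt z)

/-- The ATM ATS call price `C_t`. -/
noncomputable def ATSCall (α kbar σbar ηbar β δ : ℝ) (μ : Measure ℝ) (t : ℝ) : ℝ :=
  ∫ z, (Real.exp (ATSphi α kbar σbar ηbar β δ t * t - t * σbar ^ 2 * (ηbar * t ^ δ) * z) *
      stdN (ATSl α kbar σbar ηbar β δ t z + σbar * Real.sqrt (z * t) / 2) -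
      stdN (ATSl α kbar σbar ηbar β δ t z - σbar * Real.sqrt (z * t) / 2)) ∂μ

/-- The skew term `ξ̂_t`. -/
noncomputable def ATSSkew (α kbar σbar ηbar β δ : ℝ) (μ : Measure ℝ) (σhat : ℝ → ℝ)
    (t : ℝ) : ℝ :=
  (stdN (-(σhat t * Real.sqrt t / 2)) -
      ∫ z, stdN (ATSl α kbar σbar ηbar β δ t z - σbar * Real.sqrt (z * t) / 2) ∂μ) /
    stdNd (-(σhat t * Real.sqrt t / 2))

noncomputable def sqrtLaplaceConst : ℝ := ∫ u in Ioi (0:ℝ), (1 - exp (-u)) * u ^ (-(3/2) : ℝ)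

lemma mul_rpow_neg_three_halves {u : ℝ} (hu : 0 < u) : u * u ^ (-(3/2) : ℝ) = u ^ (-(1/2) : ℝ) := by
  rw [← rpow_one_add' hu.le (by norm_num)]; norm_num

lemma integrableOn_one_sub_exp_neg_mul_rpow :
    IntegrableOn (fun u : ℝ => (1 - exp (-u)) * u ^ (-(3/2) : ℝ)) (Ioi 0) := by
  have hmeas : AEStronglyMeasurable (fun u : ℝ => (1 - exp (-u)) * u ^ (-(3/2) : ℝ)) :=
    (by fun_prop : Measurable _).aestronglyMeasurable
  rw [← Ioc_union_Ioi_eq_Ioi zero_le_one]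
  refine IntegrableOn.union ?_ ?_
  · have hint : IntegrableOn (fun u : ℝ => u ^ (-(1/2) : ℝ)) (Ioc 0 1) :=
      (intervalIntegrable_iff_integrableOn_Ioc_of_le zero_le_one).1
        (intervalIntegral.intervalIntegrable_rpow' (by norm_num))
    refine hint.mono' hmeas.restrict ((ae_restrict_iff' measurableSet_Ioc).2 (.of_forall ?_))
    rintro u ⟨hu, -⟩
    rw [norm_of_nonneg (mul_nonneg (by simpa using hu.le) (rpow_nonneg hu.le _)),
      ← mul_rpow_neg_three_halves hu]
    gcongr
    linarith [add_one_le_exp (-u)]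
  · refine (integrableOn_Ioi_rpow_of_lt (a := -(3/2)) (by norm_num) one_pos).mono' hmeas.restrict
      ((ae_restrict_iff' measurableSet_Ioi).2 (.of_forall ?_))
    intro u (hu : 1 < u)
    have hu0 : 0 < u := one_pos.trans hu
    rw [norm_of_nonneg (mul_nonneg (by simpa using hu0.le) (rpow_nonneg hu0.le _))]
    exact mul_le_of_le_one_left (rpow_nonneg hu0.le _) (by linarith [exp_pos (-u)])

lemma sqrtLaplaceConst_pos : 0 < sqrtLaplaceConst := by
  have hpos : ∀ u ∈ Ioi (0:ℝ), 0 < (1 - exp (-u)) * u ^ (-(3/2) : ℝ) := fun u (hu : 0 < u) =>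
    mul_pos (by simpa using hu) (rpow_pos_of_pos hu _)
  rw [sqrtLaplaceConst, setIntegral_pos_iff_support_of_nonneg_ae
    ((ae_restrict_iff' measurableSet_Ioi).2 (.of_forall fun u hu => (hpos u hu).le))
    integrableOn_one_sub_exp_neg_mul_rpow]
  rw [inter_eq_right.2 fun u hu => Function.mem_support.2 (hpos u hu).ne', volume_Ioi]
  simp

lemma integral_one_sub_exp_mul_rpow {x : ℝ} (hx : 0 < x) :
    IntegrableOn (fun u => (1 - exp (-u * x)) * u ^ (-(3/2) : ℝ)) (Ioi 0) ∧
      ∫ u in Ioi 0, (1 - exp (-u * x)) * u ^ (-(3/2) : ℝ) = sqrtLaplaceConst * √x := by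
  set g : ℝ → ℝ := fun v => (1 - exp (-v)) * v ^ (-(3/2) : ℝ)
  have hscale : EqOn (fun u => (1 - exp (-u * x)) * u ^ (-(3/2) : ℝ))
      (fun u => x ^ ((3:ℝ)/2) * g (x * u)) (Ioi 0) := by
    intro u (hu : 0 < u)
    simp only [g, mul_rpow hx.le hu.le, rpow_neg hx.le]
    field_simp [(rpow_pos_of_pos hx ((3:ℝ)/2)).ne']
  refine ⟨?_, ?_⟩
  · refine IntegrableOn.congr_fun ?_ hscale.symm measurableSet_Ioi
    refine Integrable.const_mul (?_ : IntegrableOn (fun u => g (x * u)) (Ioi 0)) _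
    rw [integrableOn_Ioi_comp_mul_left_iff g 0 hx, mul_zero]
    exact integrableOn_one_sub_exp_neg_mul_rpow
  · rw [setIntegral_congr_fun measurableSet_Ioi hscale, integral_const_mul,
      integral_comp_mul_left_Ioi g 0 hx, mul_zero, smul_eq_mul, sqrt_eq_rpow]
    rw [show (1:ℝ)/2 = 3/2 + -1 by norm_num, rpow_add hx, rpow_neg_one, sqrtLaplaceConst]
    ring

lemma lintegral_one_sub_exp_mul_rpow {x : ℝ} (hx : 0 ≤ x) :
    ∫⁻ u in Ioi 0, ENNReal.ofReal ((1 - exp (-u * x)) * u ^ (-(3/2) : ℝ)) =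
      ENNReal.ofReal sqrtLaplaceConst * ENNReal.ofReal √x := by
  rcases hx.eq_or_lt with rfl | hx
  · simp
  obtain ⟨hint, heq⟩ := integral_one_sub_exp_mul_rpow hx
  rw [← ENNReal.ofReal_mul sqrtLaplaceConst_pos.le, ← heq,
    ofReal_integral_eq_lintegral_ofReal hint]
  refine (ae_restrict_iff' measurableSet_Ioi).2 (.of_forall fun u (hu : 0 < u) => ?_)
  refine mul_nonneg ?_ (rpow_nonneg hu.le _)
  simpa using mul_nonneg hu.le hx.le

/-- No integrability is needed: both sides are the real parts of the same (possibly infinite)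
lower integral. -/
theorem integral_sqrt_eq_integral_one_sub_laplace (ν : Measure ℝ) [IsProbabilityMeasure ν]
    (hν : ∀ᵐ x ∂ν, 0 ≤ x) :
    ∫ x, √x ∂ν =
      sqrtLaplaceConst⁻¹ * ∫ u in Ioi 0, (1 - ∫ x, exp (-u * x) ∂ν) * u ^ (-(3/2) : ℝ) := by
  set F : ℝ → ℝ → ℝ := fun u x => (1 - exp (-u * x)) * u ^ (-(3/2) : ℝ)
  have hF_nonneg : ∀ u, 0 < u → ∀ x, 0 ≤ x → 0 ≤ F u x := fun u hu x hx =>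
    mul_nonneg (by simpa using mul_nonneg hu.le hx) (rpow_nonneg hu.le _)
  have hexp_int : ∀ u, 0 ≤ u → Integrable (fun x => exp (-u * x)) ν := fun u hu =>
    .of_bound (by fun_prop) 1 <| hν.mono fun x hx => by
      rw [norm_of_nonneg (exp_pos _).le, exp_le_one_iff]
      nlinarith
  have hintegral : ∀ u ∈ Ioi (0:ℝ),
      ∫ x, F u x ∂ν = (1 - ∫ x, exp (-u * x) ∂ν) * u ^ (-(3/2) : ℝ) := fun u (hu : 0 < u) => by
    rw [integral_mul_const, integral_sub (integrable_const 1) (hexp_int u hu.le), integral_const,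
      probReal_univ, one_smul]
  have hinner : ∀ u ∈ Ioi (0:ℝ), ∫⁻ x, ENNReal.ofReal (F u x) ∂ν =
      ENNReal.ofReal ((1 - ∫ x, exp (-u * x) ∂ν) * u ^ (-(3/2) : ℝ)) := fun u (hu : 0 < u) => by
    have hFint : Integrable (F u) ν := ((integrable_const 1).sub (hexp_int u hu.le)).mul_const _
    rw [← hintegral u hu,
      ofReal_integral_eq_lintegral_ofReal hFint (hν.mono fun x hx => hF_nonneg u hu x hx)]
  have hswap : ∫⁻ u in Ioi 0, ENNReal.ofReal ((1 - ∫ x, exp (-u * x) ∂ν) * u ^ (-(3/2) : ℝ)) =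
      ENNReal.ofReal sqrtLaplaceConst * ∫⁻ x, ENNReal.ofReal √x ∂ν := by
    rw [← setLIntegral_congr_fun measurableSet_Ioi hinner,
      lintegral_lintegral_swap (by fun_prop), ← lintegral_const_mul' _ _ ENNReal.ofReal_ne_top]
    exact lintegral_congr_ae (hν.mono fun x hx => lintegral_one_sub_exp_mul_rpow hx)
  have hmeas : StronglyMeasurable fun u => ∫ x, exp (-u * x) ∂ν :=
    StronglyMeasurable.integral_prod_right (f := fun u x => exp (-u * x)) (by fun_prop)
  rw [integral_eq_lintegral_of_nonneg_ae (.of_forall fun x => sqrt_nonneg x) (by fun_prop),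
    integral_eq_lintegral_of_nonneg_ae, hswap, ENNReal.toReal_mul,
    ENNReal.toReal_ofReal sqrtLaplaceConst_pos.le, inv_mul_cancel_left₀ sqrtLaplaceConst_pos.ne']
  · refine (ae_restrict_iff' measurableSet_Ioi).2 (.of_forall fun u (hu : 0 < u) => ?_)
    simpa only [Pi.zero_apply, ← hintegral u hu] using
      integral_nonneg_of_ae (hν.mono fun x hx => hF_nonneg u hu x hx)
  · exact ((measurable_const.sub hmeas.measurable).mul (by fun_prop)).aestronglyMeasurable

lemma slope_one_add_mul_rpow_mem_Icc {α u a : ℝ} (hα0 : 0 ≤ α) (hα1 : α ≤ 1) (hu : 0 ≤ u)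
    (ha : 0 < a) : slope (fun s => (1 + u * s) ^ α) 0 a ∈ Icc 0 (α * u) := by
  have hua : 0 ≤ u * a := mul_nonneg hu ha.le
  have hlower : 1 ≤ (1 + u * a) ^ α := one_le_rpow (by linarith) hα0
  have hbernoulli : (1 + u * a) ^ α ≤ 1 + α * (u * a) :=
    rpow_one_add_le_one_add_mul_self (by linarith) hα0 hα1
  rw [slope_def_field, sub_zero, mul_zero, add_zero, one_rpow]
  exact ⟨div_nonneg (by linarith) ha.le, (div_le_iff₀ ha).2 (by linarith)⟩

lemma tendsto_slope_one_add_mul_rpow_nhdsGT (α u : ℝ) :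
    Tendsto (slope (fun s => (1 + u * s) ^ α) 0) (𝓝[>] 0) (𝓝 (α * u)) := by
  have hderiv : HasDerivAt (fun s => (1 + u * s) ^ α) (α * u) 0 := by
    simpa [mul_comm] using
      (((hasDerivAt_id (0:ℝ)).const_mul u).const_add 1).rpow_const (p := α) (by simp)
  exact (hasDerivAt_iff_tendsto_slope.1 hderiv).mono_left
    (nhdsWithin_mono 0 fun s (hs : 0 < s) => hs.ne')

/-- Subadditivity of `s ↦ s ^ α` bounds the difference quotient by `u ^ α * a ^ (α - 1)`. -/
lemma tendsto_slope_one_add_mul_rpow_atTop {α u : ℝ} (hα0 : 0 ≤ α) (hα1 : α < 1)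
    (hu : 0 ≤ u) : Tendsto (slope (fun s => (1 + u * s) ^ α) 0) atTop (𝓝 0) := by
  have hbound : Tendsto (fun a : ℝ => u ^ α * a ^ (-(1 - α))) atTop (𝓝 0) := by
    simpa using (tendsto_rpow_neg_atTop (by linarith : 0 < 1 - α)).const_mul (u ^ α)
  refine squeeze_zero' ?_ ?_ hbound
  · filter_upwards [eventually_gt_atTop 0] with a ha
    exact (slope_one_add_mul_rpow_mem_Icc hα0 hα1.le hu ha).1
  · filter_upwards [eventually_gt_atTop 0] with a ha
    have hsub : (1 + u * a) ^ α ≤ 1 + (u * a) ^ α :=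
      by simpa using rpow_add_le_add_rpow zero_le_one (mul_nonneg hu ha.le) hα0 hα1.le
    rw [slope_def_field, sub_zero, mul_zero, add_zero, one_rpow, div_le_iff₀ ha, mul_assoc,
      ← rpow_add_one ha.ne', neg_sub, sub_add_cancel, ← mul_rpow hu ha.le]
    linarith

section ATS

variable {α kbar β : ℝ}

/-- The paper's `k_t / ((1 - α) t)`. -/
noncomputable def atsScale (α kbar β t : ℝ) : ℝ := kbar * t ^ β / ((1 - α) * t)

lemma atsScale_eq (hα : α ≠ 1) {t : ℝ} (ht : 0 < t) :
    atsScale α kbar β t = kbar / (1 - α) * t ^ (β - 1) := by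
  rw [atsScale, rpow_sub_one ht.ne']
  field_simp [sub_ne_zero.2 hα.symm]

lemma tendsto_atsScale_atTop (hα : α < 1) (hk : 0 < kbar) (hβ : β < 1) :
    Tendsto (atsScale α kbar β) (𝓝[>] 0) atTop := by
  refine ((tendsto_rpow_neg_nhdsGT_zero (by linarith : β - 1 < 0)).const_mul_atTop
    (div_pos hk (by linarith : (0:ℝ) < 1 - α))).congr' ?_
  filter_upwards [self_mem_nhdsWithin] with t ht
  exact (atsScale_eq hα.ne ht).symm

lemma tendsto_atsScale_nhdsGT (hα : α < 1) (hk : 0 < kbar) (hβ : 1 < β) :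
    Tendsto (atsScale α kbar β) (𝓝[>] 0) (𝓝[>] 0) := by
  have hpow : Tendsto (fun t : ℝ => t ^ (β - 1)) (𝓝[>] 0) (𝓝 0) := by
    simpa [zero_rpow (by linarith : β - 1 ≠ 0)] using
      ((continuousAt_rpow_const 0 (β - 1) (Or.inr (by linarith))).tendsto).mono_left
        nhdsWithin_le_nhds
  refine tendsto_nhdsWithin_iff.2 ⟨?_, ?_⟩
  · have hlim : Tendsto (fun t => kbar / (1 - α) * t ^ (β - 1)) (𝓝[>] 0) (𝓝 0) := by
      simpa using hpow.const_mul (kbar / (1 - α))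
    refine hlim.congr' ?_
    filter_upwards [self_mem_nhdsWithin] with t ht
    exact (atsScale_eq hα.ne ht).symm
  · filter_upwards [self_mem_nhdsWithin] with t (ht : 0 < t)
    rw [mem_Ioi, atsScale_eq hα.ne ht]
    exact mul_pos (div_pos hk (by linarith)) (rpow_pos_of_pos ht _)

lemma ATSLaplace_eq_exp_slope (hα : α ∈ Ioo 0 1) (hk : 0 < kbar) {t : ℝ} (ht : 0 < t) (u : ℝ) :
    ATSLaplace α kbar β t u =
      exp (-slope (fun s => (1 + u * s) ^ α) 0 (atsScale α kbar β t) / α) := by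
  have htβ : 0 < t ^ β := rpow_pos_of_pos ht β
  have hα1 : 1 - α ≠ 0 := by linarith [hα.2]
  rw [ATSLaplace, slope_def_field, atsScale, sub_zero, mul_zero, add_zero, one_rpow]
  congr 1
  field_simp
  ring

lemma ATSLaplace_mem_Icc (hα : α ∈ Ioo 0 1) (hk : 0 < kbar) {t u : ℝ} (ht : 0 < t)
    (hu : 0 ≤ u) :
    ATSLaplace α kbar β t u ∈ Icc (exp (-u)) 1 := by
  have hscale : 0 < atsScale α kbar β t := by
    rw [atsScale_eq hα.2.ne ht]
    exact mul_pos (div_pos hk (by linarith [hα.2])) (rpow_pos_of_pos ht _)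
  obtain ⟨hslope0, hslope1⟩ := slope_one_add_mul_rpow_mem_Icc hα.1.le hα.2.le hu hscale
  rw [ATSLaplace_eq_exp_slope hα hk ht]
  refine ⟨exp_le_exp.2 ?_, exp_le_one_iff.2 ?_⟩
  · rw [neg_div, neg_le_neg_iff, div_le_iff₀ hα.1]
    linarith
  · exact div_nonpos_of_nonpos_of_nonneg (by linarith) hα.1.le

lemma norm_one_sub_ATSLaplace_mul_rpow_le (hα : α ∈ Ioo 0 1) (hk : 0 < kbar) {t u : ℝ}
    (ht : 0 < t) (hu : 0 < u) :
    ‖(1 - ATSLaplace α kbar β t u) * u ^ (-(3/2) : ℝ)‖ ≤ (1 - exp (-u)) * u ^ (-(3/2) : ℝ) := by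
  obtain ⟨hlower, hupper⟩ := ATSLaplace_mem_Icc (β := β) hα hk ht hu.le
  rw [norm_of_nonneg (mul_nonneg (by linarith) (rpow_nonneg hu.le _))]
  gcongr

lemma measurable_one_sub_ATSLaplace_mul_rpow (t : ℝ) :
    Measurable fun u => (1 - ATSLaplace α kbar β t u) * u ^ (-(3/2) : ℝ) := by
  unfold ATSLaplace
  fun_prop

lemma integrableOn_one_sub_ATSLaplace_mul_rpow (hα : α ∈ Ioo 0 1) (hk : 0 < kbar) {t : ℝ}
    (ht : 0 < t) :
    IntegrableOn (fun u => (1 - ATSLaplace α kbar β t u) * u ^ (-(3/2) : ℝ)) (Ioi 0) :=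
  integrableOn_one_sub_exp_neg_mul_rpow.mono'
    (measurable_one_sub_ATSLaplace_mul_rpow t).aestronglyMeasurable
    ((ae_restrict_iff' measurableSet_Ioi).2
      (.of_forall fun _ hu => norm_one_sub_ATSLaplace_mul_rpow_le hα hk ht hu))

lemma integral_one_sub_ATSLaplace_le (hα : α ∈ Ioo 0 1) (hk : 0 < kbar) {t : ℝ} (ht : 0 < t) :
    ∫ u in Ioi 0, (1 - ATSLaplace α kbar β t u) * u ^ (-(3/2) : ℝ) ≤ sqrtLaplaceConst :=
  setIntegral_mono_on (integrableOn_one_sub_ATSLaplace_mul_rpow hα hk ht)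
    integrableOn_one_sub_exp_neg_mul_rpow measurableSet_Ioi
    fun _ hu => (le_abs_self _).trans (norm_one_sub_ATSLaplace_mul_rpow_le hα hk ht hu)

lemma tendsto_integral_one_sub_ATSLaplace (hα : α ∈ Ioo 0 1) (hk : 0 < kbar) {ℓ : ℝ → ℝ}
    (hℓ : ∀ u > 0, Tendsto (fun t => ATSLaplace α kbar β t u) (𝓝[>] 0) (𝓝 (ℓ u))) :
    Tendsto (fun t => ∫ u in Ioi 0, (1 - ATSLaplace α kbar β t u) * u ^ (-(3/2) : ℝ)) (𝓝[>] 0)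
      (𝓝 (∫ u in Ioi 0, (1 - ℓ u) * u ^ (-(3/2) : ℝ))) := by
  refine tendsto_integral_filter_of_dominated_convergence _
    (.of_forall fun t => (measurable_one_sub_ATSLaplace_mul_rpow t).aestronglyMeasurable)
    ?_ integrableOn_one_sub_exp_neg_mul_rpow ?_
  · filter_upwards [self_mem_nhdsWithin] with t ht
    exact (ae_restrict_iff' measurableSet_Ioi).2
      (.of_forall fun u hu => norm_one_sub_ATSLaplace_mul_rpow_le hα hk ht hu)
  · exact (ae_restrict_iff' measurableSet_Ioi).2
      (.of_forall fun u hu => ((hℓ u hu).const_sub 1).mul_const _)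

lemma tendsto_ATSLaplace_of_tendsto_slope (hα : α ∈ Ioo 0 1) (hk : 0 < kbar) {u ℓ : ℝ}
    (h : Tendsto (fun t => slope (fun s => (1 + u * s) ^ α) 0 (atsScale α kbar β t)) (𝓝[>] 0)
      (𝓝 ℓ)) :
    Tendsto (fun t => ATSLaplace α kbar β t u) (𝓝[>] 0) (𝓝 (exp (-ℓ / α))) := by
  refine ((continuous_exp.tendsto _).comp (h.neg.div_const α)).congr' ?_
  filter_upwards [self_mem_nhdsWithin] with t ht
  exact (ATSLaplace_eq_exp_slope hα hk ht u).symm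

lemma tendsto_ATSLaplace_of_lt_one (hα : α ∈ Ioo 0 1) (hk : 0 < kbar) (hβ : β < 1) {u : ℝ}
    (hu : 0 ≤ u) : Tendsto (fun t => ATSLaplace α kbar β t u) (𝓝[>] 0) (𝓝 1) := by
  simpa using tendsto_ATSLaplace_of_tendsto_slope hα hk
    ((tendsto_slope_one_add_mul_rpow_atTop hα.1.le hα.2 hu).comp
      (tendsto_atsScale_atTop hα.2 hk hβ))

lemma tendsto_ATSLaplace_of_one_lt (hα : α ∈ Ioo 0 1) (hk : 0 < kbar) (hβ : 1 < β) (u : ℝ) :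
    Tendsto (fun t => ATSLaplace α kbar β t u) (𝓝[>] 0) (𝓝 (exp (-u))) := by
  simpa [neg_div, mul_div_cancel_left₀ _ hα.1.ne'] using
    tendsto_ATSLaplace_of_tendsto_slope hα hk
      ((tendsto_slope_one_add_mul_rpow_nhdsGT α u).comp (tendsto_atsScale_nhdsGT hα.2 hk hβ))

lemma integral_sqrt_eq_integral_one_sub_ATSLaplace {ν : Measure ℝ} [IsProbabilityMeasure ν]
    {t : ℝ} (hν : ν (Iio 0) = 0) (hlap : ∀ u ≥ 0, ∫ x, exp (-u * x) ∂ν = ATSLaplace α kbar β t u) :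
    ∫ x, √x ∂ν =
      sqrtLaplaceConst⁻¹ * ∫ u in Ioi 0, (1 - ATSLaplace α kbar β t u) * u ^ (-(3/2) : ℝ) := by
  have hnonneg : ∀ᵐ x ∂ν, 0 ≤ x :=
    (measure_eq_zero_iff_ae_notMem.1 hν).mono fun x hx => not_lt.1 hx
  rw [integral_sqrt_eq_integral_one_sub_laplace ν hnonneg]
  congr 1
  exact setIntegral_congr_fun measurableSet_Ioi fun u (hu : 0 < u) => by rw [hlap u hu.le]

end ATS

/-- for an ATS mixing family, `∫ √x dμ_t(x) ≤ √2` for every `t > 0`;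
moreover, as `t → 0⁺`, `∫ √x dμ_t(x)` tends to `0` if `β < 1` and to `1` if `β > 1`. -/
theorem stmt3 (α kbar β : ℝ) (hα : α ∈ Set.Ioo (0:ℝ) 1) (hk : 0 < kbar)
    (μ : ℝ → Measure ℝ)
    (hprob : ∀ t > 0, IsProbabilityMeasure (μ t))
    (hsupp : ∀ t > 0, μ t (Set.Iio 0) = 0)
    (hlap : ∀ t > 0, ∀ u ≥ 0,
      (∫ x, Real.exp (-u * x) ∂(μ t)) = ATSLaplace α kbar β t u) :
    (∀ t > 0, (∫ x, Real.sqrt x ∂(μ t)) ≤ Real.sqrt 2) ∧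
    (β < 1 → Tendsto (fun t => ∫ x, Real.sqrt x ∂(μ t)) (𝓝[>] (0:ℝ)) (𝓝 0)) ∧
    (1 < β → Tendsto (fun t => ∫ x, Real.sqrt x ∂(μ t)) (𝓝[>] (0:ℝ)) (𝓝 1)) := by
  have hrepr : ∀ t > 0, ∫ x, √x ∂μ t =
      sqrtLaplaceConst⁻¹ * ∫ u in Ioi 0, (1 - ATSLaplace α kbar β t u) * u ^ (-(3/2) : ℝ) :=
    fun t ht =>
      have := hprob t ht
      integral_sqrt_eq_integral_one_sub_ATSLaplace (hsupp t ht) (hlap t ht)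
  have hlim : ∀ ℓ : ℝ → ℝ, (∀ u > 0, Tendsto (ATSLaplace α kbar β · u) (𝓝[>] 0) (𝓝 (ℓ u))) →
      Tendsto (fun t => ∫ x, √x ∂μ t) (𝓝[>] 0)
        (𝓝 (sqrtLaplaceConst⁻¹ * ∫ u in Ioi 0, (1 - ℓ u) * u ^ (-(3/2) : ℝ))) :=
    fun ℓ hℓ => ((tendsto_integral_one_sub_ATSLaplace hα hk hℓ).const_mul _).congr'
      (eventually_mem_nhdsWithin.mono fun t ht => (hrepr t ht).symm)
  refine ⟨fun t ht => ?_, fun hβ => ?_, fun hβ => ?_⟩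
  · calc ∫ x, √x ∂μ t ≤ sqrtLaplaceConst⁻¹ * sqrtLaplaceConst := by
          rw [hrepr t ht]
          gcongr
          exacts [(inv_pos.2 sqrtLaplaceConst_pos).le, integral_one_sub_ATSLaplace_le hα hk ht]
      _ = 1 := inv_mul_cancel₀ sqrtLaplaceConst_pos.ne'
      _ ≤ √2 := by simp [one_le_sqrt]
  · simpa using hlim _ fun u hu => tendsto_ATSLaplace_of_lt_one hα hk hβ hu.le
  · have h := hlim _ fun u _ => tendsto_ATSLaplace_of_one_lt hα hk hβ u
    rwa [← sqrtLaplaceConst, inv_mul_cancel₀ sqrtLaplaceConst_pos.ne'] at h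
end

section
/- Assume 0 < β ≤ 1/(1−α/2) and −min(β, (1−β·(1−α))/α) < δ ≤ 0. Let (μ_t)_{t>0} be an ATS mixing family and let σ̂ : (0,∞) → (0,∞) be an ATM implied volatility for (μ_t). Then σ̂_t·√t → 0 as t → 0⁺. -/
open MeasureTheory Real Filter Set Topology Asymptotics

/-!
Write `u_t = t σ̄² η_t` and `S(z) = exp (φ_t t - u_t z)`, the density of the Esscher transform
of `μ_t`, so that `∫ S dμ_t = 1`. Splitting `S N(b) - N(a) = S (N(b) - N(a)) + (S - 1) N(a)`,
the first term is at most `S σ̄ √(z t)` because `N` is 1-Lipschitz, and the second at most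
`S - exp (-u_t z)` because `exp (-u_t z) ≤ min S 1`. Integrating,
`C_t ≤ σ̄ √t (1 + ∫ S z dμ_t) + φ_t t`. The tempered stable Laplace exponent is concave with
slope `-1` at the origin, which gives `φ_t t ≤ u_t` and bounds the tilted mean `∫ S z dμ_t` by
`exp (u_t / 2)`. Since `δ > -1`, `u_t → 0`, hence `C_t → 0`; as `x ↦ N(x) - N(-x)` is
increasing and positive on `(0, ∞)`, this forces `σ̂_t √t → 0`.
-/
lemma integrable_exp_neg_sq_div_two : Integrable fun x : ℝ => exp (-x ^ 2 / 2) := by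
  simpa [div_eq_inv_mul, mul_comm] using integrable_exp_neg_mul_sq (b := 2⁻¹) (by norm_num)

lemma stdN_nonneg (z : ℝ) : 0 ≤ stdN z := by
  unfold stdN
  have : 0 ≤ ∫ x in Iic z, exp (-x ^ 2 / 2) := integral_nonneg fun x => (exp_pos _).le
  positivity

lemma stdN_le_one (z : ℝ) : stdN z ≤ 1 := by
  have htotal : ∫ x : ℝ, exp (-x ^ 2 / 2) = √(2 * π) := by
    simpa [div_eq_inv_mul, mul_comm] using integral_gaussian 2⁻¹
  have hle : ∫ x in Iic z, exp (-x ^ 2 / 2) ≤ √(2 * π) :=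
    htotal ▸ setIntegral_le_integral integrable_exp_neg_sq_div_two
      (.of_forall fun x => (exp_pos _).le)
  unfold stdN
  rw [inv_mul_le_iff₀ (by positivity), mul_one]
  exact hle

lemma stdN_sub_stdN (a b : ℝ) :
    stdN b - stdN a = (√(2 * π))⁻¹ * ∫ x in a..b, exp (-x ^ 2 / 2) := by
  rw [stdN, stdN, ← mul_sub, intervalIntegral.integral_Iic_sub_Iic
    integrable_exp_neg_sq_div_two.integrableOn integrable_exp_neg_sq_div_two.integrableOn]

lemma stdN_sub_stdN_le {a b : ℝ} (hab : a ≤ b) : stdN b - stdN a ≤ b - a := by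
  have hI : ∫ x in a..b, exp (-x ^ 2 / 2) ≤ b - a := by
    refine (le_abs_self _).trans ?_
    simpa [abs_of_nonneg (sub_nonneg.2 hab)] using
      intervalIntegral.norm_integral_le_of_norm_le_const (C := 1) (a := a) (b := b)
        (f := fun x => exp (-x ^ 2 / 2)) fun x _ => by
          rw [norm_of_nonneg (exp_pos _).le, exp_le_one_iff]; nlinarith [sq_nonneg x]
  have hI0 : 0 ≤ ∫ x in a..b, exp (-x ^ 2 / 2) :=
    intervalIntegral.integral_nonneg hab fun x _ => (exp_pos _).le
  have hc : (√(2 * π))⁻¹ ≤ 1 :=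
    inv_le_one_of_one_le₀ (one_le_sqrt.2 (by nlinarith [pi_gt_three]))
  rw [stdN_sub_stdN]
  nlinarith

lemma stdN_mono : Monotone stdN := fun a b hab => by
  rw [← sub_nonneg, stdN_sub_stdN]
  exact mul_nonneg (by positivity) (intervalIntegral.integral_nonneg hab fun x _ => (exp_pos _).le)

lemma stdN_sub_stdN_neg_pos {e : ℝ} (he : 0 < e) : 0 < stdN e - stdN (-e) := by
  rw [stdN_sub_stdN]
  exact mul_pos (by positivity) (intervalIntegral.intervalIntegral_pos_of_pos_on
    ((by fun_prop : Continuous fun x : ℝ => exp (-x ^ 2 / 2)).intervalIntegrable _ _)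
    (fun x _ => exp_pos _) (by linarith))

lemma rpow_add_le_rpow_add_mul {x y α : ℝ} (hx : 1 ≤ x) (hy : 0 ≤ y) (hα0 : 0 ≤ α)
    (hα1 : α ≤ 1) : (x + y) ^ α ≤ x ^ α + α * y := by
  have hx0 : 0 < x := by linarith
  have hsplit : x + y = x * (1 + y / x) := by field_simp
  have hbern : (1 + y / x) ^ α ≤ 1 + α * (y / x) :=
    rpow_one_add_le_one_add_mul_self (by linarith [div_nonneg hy hx0.le]) hα0 hα1
  have hxα : x ^ α ≤ x := by simpa using rpow_le_rpow_of_exponent_le hx hα1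
  calc (x + y) ^ α = x ^ α * (1 + y / x) ^ α := by rw [hsplit, mul_rpow hx0.le (by positivity)]
    _ ≤ x ^ α * (1 + α * (y / x)) := by gcongr
    _ = x ^ α + x ^ α / x * (α * y) := by field_simp
    _ ≤ x ^ α + 1 * (α * y) := by
        gcongr
        exact (div_le_one hx0).2 hxα
    _ = x ^ α + α * y := by ring

/-- The logarithm of the Laplace transform of a tempered stable law with stability index `α`,
normalised to have mean one (its derivative at `0` is `-1`). -/
noncomputable def temperedStableExponent (a α v : ℝ) : ℝ :=
  a * (1 - (1 + v / (a * α)) ^ α)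

section TemperedStable

variable {a α v : ℝ}

lemma neg_le_temperedStableExponent (ha : 0 < a) (hα0 : 0 < α) (hα1 : α ≤ 1) (hv : 0 ≤ v) :
    -v ≤ temperedStableExponent a α v := by
  have hbern : (1 + v / (a * α)) ^ α ≤ 1 + α * (v / (a * α)) :=
    rpow_one_add_le_one_add_mul_self (by linarith [div_nonneg hv (by positivity : 0 ≤ a * α)])
      hα0.le hα1
  have hlin : a * (α * (v / (a * α))) = v := by field_simp
  unfold temperedStableExponent
  nlinarith

lemma temperedStableExponent_half_le (ha : 0 < a) (hα0 : 0 < α) (hα1 : α ≤ 1) (hv : 0 ≤ v) :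
    temperedStableExponent a α (v / 2) ≤ v / 2 + temperedStableExponent a α v := by
  have hx : 0 ≤ v / 2 / (a * α) := by positivity
  have hconc : (1 + v / 2 / (a * α) + v / 2 / (a * α)) ^ α
      ≤ (1 + v / 2 / (a * α)) ^ α + α * (v / 2 / (a * α)) :=
    rpow_add_le_rpow_add_mul (by linarith) hx hα0.le hα1
  have hsum : 1 + v / 2 / (a * α) + v / 2 / (a * α) = 1 + v / (a * α) := by ring
  have hlin : a * (α * (v / 2 / (a * α))) = v / 2 := by field_simp
  rw [hsum] at hconc
  unfold temperedStableExponent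
  nlinarith

end TemperedStable

lemma ATSLaplace_eq_exp {α kbar β t : ℝ} (hα0 : 0 < α) (hα1 : α < 1) (ht : 0 < t)
    (v : ℝ) :
    ATSLaplace α kbar β t v =
      exp (temperedStableExponent (t / (kbar * t ^ β) * ((1 - α) / α)) α v) := by
  have : 0 < t ^ β := rpow_pos_of_pos ht β
  have : 0 < 1 - α := by linarith
  unfold ATSLaplace temperedStableExponent
  congr 4
  field_simp

lemma mul_exp_neg_mul_le {u : ℝ} (hu : 0 < u) (z : ℝ) :
    z * exp (-u * z) ≤ 2 / u * (exp (-(u / 2) * z) - exp (-u * z)) := by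
  have hexp : exp (-u * z) * exp (u * z / 2) = exp (-(u / 2) * z) := by
    rw [← exp_add]; ring_nf
  have h := mul_le_mul_of_nonneg_left (add_one_le_exp (u * z / 2)) (exp_pos (-u * z)).le
  rw [hexp] at h
  rw [div_mul_eq_mul_div, le_div_iff₀ hu]
  nlinarith

lemma mul_stdN_sub_stdN_le {S m a b : ℝ} (hm : 0 ≤ m) (hmS : m ≤ S) (hm1 : m ≤ 1) (hab : a ≤ b) :
    S * stdN b - stdN a ≤ S * (b - a) + (S - m) := by
  have hlip := stdN_sub_stdN_le hab
  have h0 := stdN_nonneg a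
  have h1 := stdN_le_one a
  have hS : (S - 1) * stdN a ≤ S - m := by
    rcases le_total S 1 with hS1 | hS1 <;> nlinarith
  nlinarith

lemma integral_exp_sub_mul {P : Measure ℝ} {u c : ℝ} (hc : exp (-c) = ∫ z, exp (-u * z) ∂P) :
    ∫ z, exp (c - u * z) ∂P = 1 := by
  simp_rw [sub_eq_add_neg, exp_add, integral_const_mul, ← neg_mul, ← hc, ← exp_add,
    add_neg_cancel, exp_zero]

section TiltedMeasure

variable {P : Measure ℝ} [IsProbabilityMeasure P]

lemma integrable_exp_neg_mul (hP : ∀ᵐ z ∂P, 0 ≤ z) {v : ℝ} (hv : 0 ≤ v) :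
    Integrable (fun z => exp (-v * z)) P :=
  .of_bound (by fun_prop) 1 <| hP.mono fun z hz => by
    rw [norm_of_nonneg (exp_pos _).le, exp_le_one_iff]
    nlinarith

lemma integral_exp_neg_mul_le_one (hP : ∀ᵐ z ∂P, 0 ≤ z) {v : ℝ} (hv : 0 ≤ v) :
    ∫ z, exp (-v * z) ∂P ≤ 1 := by
  have := integral_mono_ae (integrable_exp_neg_mul hP hv) (integrable_const (1 : ℝ)) <|
    hP.mono fun z hz => show exp (-v * z) ≤ 1 by rw [exp_le_one_iff]; nlinarith
  simpa using this

lemma integrable_mul_exp_neg_mul (hP : ∀ᵐ z ∂P, 0 ≤ z) {u : ℝ} (hu : 0 < u) :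
    Integrable (fun z => z * exp (-u * z)) P :=
  .mono' (((integrable_exp_neg_mul hP (v := u / 2) (by positivity)).sub
      (integrable_exp_neg_mul hP hu.le)).const_mul (2 / u)) (by fun_prop) <|
    hP.mono fun z hz => by
      rw [norm_of_nonneg (by positivity)]
      exact mul_exp_neg_mul_le hu z

variable {u c : ℝ}

lemma integral_exp_sub_mul_mul_le (hP : ∀ᵐ z ∂P, 0 ≤ z) (hu : 0 < u)
    (hc : exp (-c) = ∫ z, exp (-u * z) ∂P)
    (hhalf : ∫ z, exp (-(u / 2) * z) ∂P ≤ exp (u / 2) * exp (-c)) :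
    ∫ z, exp (c - u * z) * z ∂P ≤ exp (u / 2) := by
  have hI₁ := integrable_exp_neg_mul hP (v := u / 2) (by positivity)
  have hI₂ := integrable_exp_neg_mul hP hu.le
  have hmean : ∫ z, z * exp (-u * z) ∂P ≤ 2 / u * (exp (u / 2) * exp (-c) - exp (-c)) := by
    calc ∫ z, z * exp (-u * z) ∂P
        ≤ ∫ z, 2 / u * (exp (-(u / 2) * z) - exp (-u * z)) ∂P :=
          integral_mono (integrable_mul_exp_neg_mul hP hu) ((hI₁.sub hI₂).const_mul _)
            (mul_exp_neg_mul_le hu)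
      _ = 2 / u * (∫ z, exp (-(u / 2) * z) ∂P - exp (-c)) := by
          rw [integral_const_mul, integral_sub hI₁ hI₂, hc]
      _ ≤ 2 / u * (exp (u / 2) * exp (-c) - exp (-c)) := by gcongr
  have hsplit : ∀ z, exp (c - u * z) * z = exp c * (z * exp (-u * z)) := fun z => by
    rw [sub_eq_add_neg, exp_add]; ring_nf
  have hkey : exp (u / 2) - 1 ≤ u / 2 * exp (u / 2) := by
    have h := mul_le_mul_of_nonneg_left (one_sub_le_exp_neg (u / 2)) (exp_pos (u / 2)).le
    rw [← exp_add, add_neg_cancel, exp_zero] at h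
    linarith
  calc ∫ z, exp (c - u * z) * z ∂P = exp c * ∫ z, z * exp (-u * z) ∂P := by
        simp_rw [hsplit]; exact integral_const_mul _ _
    _ ≤ exp c * (2 / u * (exp (u / 2) * exp (-c) - exp (-c))) := by gcongr
    _ = 2 / u * (exp (u / 2) - 1) := by
        rw [exp_neg]; field_simp
    _ ≤ exp (u / 2) := by
        rw [div_mul_eq_mul_div, div_le_iff₀ hu]; linarith

lemma integral_call_le (hP : ∀ᵐ z ∂P, 0 ≤ z) {t σ : ℝ} (hσ : 0 ≤ σ) (hu : 0 < u)
    (hc : exp (-c) = ∫ z, exp (-u * z) ∂P)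
    (hhalf : ∫ z, exp (-(u / 2) * z) ∂P ≤ exp (u / 2) * exp (-c)) (w : ℝ → ℝ) :
    ∫ z, (exp (c - u * z) * stdN (w z + σ * √(z * t) / 2) - stdN (w z - σ * √(z * t) / 2)) ∂P
      ≤ σ * √t * (1 + exp (u / 2)) + c := by
  have hc0 : 0 ≤ c := by
    have := (hc.trans_le (integral_exp_neg_mul_le_one hP hu.le))
    rw [exp_le_one_iff] at this; linarith
  have hI := integrable_exp_neg_mul hP hu.le
  have hS : Integrable (fun z => exp (c - u * z)) P := by
    simp_rw [sub_eq_add_neg, exp_add, ← neg_mul]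
    exact hI.const_mul _
  have hSz : Integrable (fun z => exp (c - u * z) * z) P := by
    refine ((integrable_mul_exp_neg_mul hP hu).const_mul (exp c)).congr (.of_forall fun z => ?_)
    simp only
    rw [mul_left_comm, ← exp_add]
    ring_nf
  have hbound : ∀ᵐ z ∂P,
      exp (c - u * z) * stdN (w z + σ * √(z * t) / 2) - stdN (w z - σ * √(z * t) / 2)
        ≤ σ * √t * (exp (c - u * z) + exp (c - u * z) * z) + (exp (c - u * z) - exp (-u * z)) :=
    hP.mono fun z hz => by
      have hmS : exp (-u * z) ≤ exp (c - u * z) := exp_le_exp.2 (by linarith)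
      have hm1 : exp (-u * z) ≤ 1 := exp_le_one_iff.2 (by nlinarith)
      have hsqrt : √z ≤ 1 + z := by nlinarith [sq_sqrt hz, sqrt_nonneg z]
      have hwidth : exp (c - u * z) * (σ * √(z * t))
          ≤ σ * √t * (exp (c - u * z) + exp (c - u * z) * z) := by
        rw [sqrt_mul hz]
        have := mul_le_mul_of_nonneg_left hsqrt
          (by positivity : 0 ≤ σ * √t * exp (c - u * z))
        linarith
      have := mul_stdN_sub_stdN_le (exp_pos (-u * z)).le hmS hm1
        (by linarith [mul_nonneg hσ (sqrt_nonneg (z * t))] :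
          w z - σ * √(z * t) / 2 ≤ w z + σ * √(z * t) / 2)
      ring_nf at this hwidth ⊢
      linarith
  by_cases hf : Integrable (fun z =>
      exp (c - u * z) * stdN (w z + σ * √(z * t) / 2) - stdN (w z - σ * √(z * t) / 2)) P
  · calc _ ≤ ∫ z, σ * √t * (exp (c - u * z) + exp (c - u * z) * z)
            + (exp (c - u * z) - exp (-u * z)) ∂P :=
          integral_mono_ae hf (((hS.add hSz).const_mul _).add (hS.sub hI)) hbound
      _ = σ * √t * (1 + ∫ z, exp (c - u * z) * z ∂P) + (1 - exp (-c)) := by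
          rw [integral_add, integral_const_mul, integral_add hS hSz, integral_sub hS hI,
            integral_exp_sub_mul hc, hc]
          · exact (hS.add hSz).const_mul _
          · exact hS.sub hI
      _ ≤ σ * √t * (1 + exp (u / 2)) + c := by
          gcongr
          · exact integral_exp_sub_mul_mul_le hP hu hc hhalf
          · linarith [one_sub_le_exp_neg c]
  · rw [integral_undef hf]
    positivity

end TiltedMeasure

section ATSModel

variable {α kbar σbar ηbar β δ t : ℝ}

lemma ATSphi_mul_eq_neg_temperedStableExponent (hα0 : 0 < α) (hα1 : α < 1) (ht : 0 < t) :
    ATSphi α kbar σbar ηbar β δ t * t = -temperedStableExponent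
      (t / (kbar * t ^ β) * ((1 - α) / α)) α (t * σbar ^ 2 * (ηbar * t ^ δ)) := by
  rw [ATSphi, ATSLaplace_eq_exp hα0 hα1 ht, log_exp, div_mul_cancel₀ _ ht.ne']

lemma ATSCall_le (hα0 : 0 < α) (hα1 : α < 1) (hk : 0 < kbar) (hσ : 0 < σbar) (hη : 0 < ηbar)
    (ht : 0 < t) (P : Measure ℝ) [IsProbabilityMeasure P] (hsupp : P (Iio 0) = 0)
    (hlap : ∀ u ≥ 0, ∫ x, exp (-u * x) ∂P = ATSLaplace α kbar β t u) :
    ATSCall α kbar σbar ηbar β δ P t ≤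
      σbar * √t * (1 + exp (t * σbar ^ 2 * (ηbar * t ^ δ) / 2)) +
        t * σbar ^ 2 * (ηbar * t ^ δ) := by
  have ha : 0 < t / (kbar * t ^ β) * ((1 - α) / α) := by
    have := rpow_pos_of_pos ht β
    have : 0 < 1 - α := by linarith
    positivity
  have hu : 0 < t * σbar ^ 2 * (ηbar * t ^ δ) := by have := rpow_pos_of_pos ht δ; positivity
  set a := t / (kbar * t ^ β) * ((1 - α) / α)
  set u := t * σbar ^ 2 * (ηbar * t ^ δ)
  have hP : ∀ᵐ z ∂P, 0 ≤ z :=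
    (measure_eq_zero_iff_ae_notMem.1 hsupp).mono fun z hz => not_lt.1 hz
  have hlap' : ∀ v ≥ 0, ∫ x, exp (-v * x) ∂P = exp (temperedStableExponent a α v) :=
    fun v hv => (hlap v hv).trans (ATSLaplace_eq_exp hα0 hα1 ht v)
  have hc : exp (-(ATSphi α kbar σbar ηbar β δ t * t)) = ∫ z, exp (-u * z) ∂P := by
    rw [ATSphi_mul_eq_neg_temperedStableExponent hα0 hα1 ht, neg_neg, hlap' u hu.le]
  have hhalf : ∫ z, exp (-(u / 2) * z) ∂P ≤
      exp (u / 2) * exp (-(ATSphi α kbar σbar ηbar β δ t * t)) := by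
    rw [hc, hlap' _ (by positivity), hlap' u hu.le, ← exp_add, exp_le_exp]
    exact temperedStableExponent_half_le ha hα0 hα1.le hu.le
  have hcu : ATSphi α kbar σbar ηbar β δ t * t ≤ u := by
    rw [ATSphi_mul_eq_neg_temperedStableExponent hα0 hα1 ht, neg_le]
    exact neg_le_temperedStableExponent ha hα0 hα1.le hu.le
  calc ATSCall α kbar σbar ηbar β δ P t
      ≤ σbar * √t * (1 + exp (u / 2)) + ATSphi α kbar σbar ηbar β δ t * t :=
        integral_call_le hP hσ.le hu hc hhalf _
    _ ≤ σbar * √t * (1 + exp (u / 2)) + u := by gcongr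

end ATSModel

lemma tendsto_zero_of_tendsto_stdN_sub_stdN_neg {ι : Type*} {l : Filter ι} {f : ι → ℝ}
    (hf : ∀ᶠ i in l, 0 ≤ f i) (h : Tendsto (fun i => stdN (f i) - stdN (-f i)) l (𝓝 0)) :
    Tendsto f l (𝓝 0) := by
  refine tendsto_order.2 ⟨fun a ha => hf.mono fun i hi => ha.trans_le hi, fun ε hε => ?_⟩
  filter_upwards [h.eventually_lt_const (stdN_sub_stdN_neg_pos hε)] with i hi
  by_contra! hεi
  linarith [stdN_mono hεi, stdN_mono (neg_le_neg hεi)]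

lemma tendsto_self_mul_rpow_nhdsGT_zero {δ : ℝ} (hδ : -1 < δ) :
    Tendsto (fun t : ℝ => t * t ^ δ) (𝓝[>] 0) (𝓝 0) := by
  have hpow : Tendsto (fun t : ℝ => t ^ (1 + δ)) (𝓝[>] 0) (𝓝 0) := by
    simpa [zero_rpow (by linarith : 1 + δ ≠ 0)] using
      (continuousAt_rpow_const 0 (1 + δ) (.inr (by linarith))).tendsto.mono_left
        nhdsWithin_le_nhds
  refine hpow.congr' ?_
  filter_upwards [self_mem_nhdsWithin] with t (ht : 0 < t)
  rw [rpow_add ht, rpow_one]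

theorem stmt11_general (α kbar σbar ηbar β δ : ℝ) (hα : α ∈ Set.Ioo (0:ℝ) 1)
    (hk : 0 < kbar) (hσ : 0 < σbar) (hη : 0 < ηbar)
    (hδl : -min β ((1 - β * (1 - α)) / α) < δ)
    (μ : ℝ → Measure ℝ)
    (hprob : ∀ t > 0, IsProbabilityMeasure (μ t))
    (hsupp : ∀ t > 0, μ t (Set.Iio 0) = 0)
    (hlap : ∀ t > 0, ∀ u ≥ 0,
      (∫ x, Real.exp (-u * x) ∂(μ t)) = ATSLaplace α kbar β t u)
    (σhat : ℝ → ℝ) (hσpos : ∀ t > 0, 0 < σhat t)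
    (hiv : ∀ t > 0,
      stdN (σhat t * Real.sqrt t / 2) - stdN (-(σhat t * Real.sqrt t / 2)) =
        ATSCall α kbar σbar ηbar β δ (μ t) t) :
    Tendsto (fun t => σhat t * Real.sqrt t) (𝓝[>] (0:ℝ)) (𝓝 0) := by
  obtain ⟨hα0, hα1⟩ := hα
  have hδ : -1 < δ := by
    have : min β ((1 - β * (1 - α)) / α) ≤ 1 := by
      rcases le_or_gt β 1 with hβ | hβ
      · exact (min_le_left _ _).trans hβ
      · exact (min_le_right _ _).trans ((div_le_one hα0).2 (by nlinarith))
    linarith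
  have hu : Tendsto (fun t => t * σbar ^ 2 * (ηbar * t ^ δ)) (𝓝[>] 0) (𝓝 0) := by
    have := (tendsto_self_mul_rpow_nhdsGT_zero hδ).const_mul (σbar ^ 2 * ηbar)
    rw [mul_zero] at this
    exact this.congr fun t => by ring
  have hsqrt : Tendsto (fun t => √t) (𝓝[>] 0) (𝓝 0) := by
    simpa using continuous_sqrt.tendsto 0 |>.mono_left nhdsWithin_le_nhds
  have hbound := ((hsqrt.const_mul σbar).mul ((hu.div_const 2).rexp.const_add 1)).add hu
  simp only [mul_zero, zero_mul, zero_add] at hbound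
  have hgap : Tendsto (fun t => stdN (σhat t * √t / 2) - stdN (-(σhat t * √t / 2)))
      (𝓝[>] 0) (𝓝 0) := by
    refine tendsto_of_tendsto_of_tendsto_of_le_of_le' tendsto_const_nhds hbound ?_ ?_
    all_goals filter_upwards [self_mem_nhdsWithin] with t (ht : 0 < t)
    · have := hσpos t ht
      exact sub_nonneg.2 (stdN_mono (by nlinarith [sqrt_nonneg t]))
    · have := hprob t ht
      rw [hiv t ht]
      exact ATSCall_le hα0 hα1 hk hσ hη ht (μ t) (hsupp t ht) (hlap t ht)
  have hx := tendsto_zero_of_tendsto_stdN_sub_stdN_neg (eventually_nhdsWithin_of_forall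
    fun t ht => by have := hσpos t ht; positivity) hgap
  simpa [mul_div_cancel₀] using hx.const_mul 2

/-- over the admissible region, the ATM implied volatility satisfies
`σ̂_t·√t → 0` as `t → 0⁺`. -/
theorem stmt11 (α kbar σbar ηbar β δ : ℝ) (hα : α ∈ Set.Ioo (0:ℝ) 1)
    (hk : 0 < kbar) (hσ : 0 < σbar) (hη : 0 < ηbar)
    (hβ0 : 0 < β) (hβ : β ≤ 1 / (1 - α / 2))
    (hδl : -min β ((1 - β * (1 - α)) / α) < δ) (hδu : δ ≤ 0)
    (μ : ℝ → Measure ℝ)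
    (hprob : ∀ t > 0, IsProbabilityMeasure (μ t))
    (hsupp : ∀ t > 0, μ t (Set.Iio 0) = 0)
    (hlap : ∀ t > 0, ∀ u ≥ 0,
      (∫ x, Real.exp (-u * x) ∂(μ t)) = ATSLaplace α kbar β t u)
    (σhat : ℝ → ℝ) (hσpos : ∀ t > 0, 0 < σhat t)
    (hiv : ∀ t > 0,
      stdN (σhat t * Real.sqrt t / 2) - stdN (-(σhat t * Real.sqrt t / 2)) =
        ATSCall α kbar σbar ηbar β δ (μ t) t) :
    Tendsto (fun t => σhat t * Real.sqrt t) (𝓝[>] (0:ℝ)) (𝓝 0) :=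
  stmt11_general α kbar σbar ηbar β δ hα hk hσ hη hδl μ hprob hsupp hlap σhat hσpos hiv
end
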